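/- Let α > 1, integers n > k ≥ 1, and reals M > m with M − m < k^{−(α−1)}/(α−1). Let z ∈ ℝⁿ have exactly k coordinates equal to M and the remaining n−k coordinates equal to m. Then every coordinate of α-entmax(z) is strictly positive (the distribution is dense). -/

import Mathlib

/-!
If the threshold `τ` reached `(α - 1) m`, the `m`-coordinates would vanish and each of the `k`
coordinates equal to `M` would carry `((α - 1) M - τ)^(1/(α-1)) ≤ ((α - 1)(M - m))^(1/(α-1))`,
which the gap condition makes smaller than `1/k`; the total mass would then be below `1`.
Hence `τ < (α - 1) m ≤ (α - 1) z_i` for every `i`.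
-/

/-- The coordinate value of `α`-entmax with threshold `τ` at a logit `x`. -/
noncomputable def entmaxTerm (α τ x : ℝ) : ℝ :=
  (max ((α - 1) * x - τ) 0) ^ ((1 : ℝ) / (α - 1))

theorem Finset.sum_comp_eq_ncard_nsmul {ι β γ : Type*} [Fintype ι] [AddCommMonoid γ]
    (z : ι → β) (f : β → γ) {a b : β} (hvals : ∀ i, z i = a ∨ z i = b) (hb : f b = 0) :
    ∑ i, f (z i) = {i | z i = a}.ncard • f a := by
  classical
  have hterm : ∀ i, f (z i) = if z i = a then f a else 0 := by
    intro i
    split_ifs with h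
    · rw [h]
    · rw [(hvals i).resolve_left h, hb]
  simp only [hterm, Finset.sum_ite, Finset.sum_const, smul_zero, add_zero,
    ← Set.ncard_coe_finset, Finset.coe_filter, Finset.mem_univ, true_and]

theorem entmaxTerm_pos_of_lt {α τ x : ℝ} (h : τ < (α - 1) * x) : 0 < entmaxTerm α τ x :=
  Real.rpow_pos_of_pos (lt_max_of_lt_left (sub_pos.2 h)) _

theorem entmaxTerm_eq_zero_of_le {α τ x : ℝ} (hα : α ≠ 1) (h : (α - 1) * x ≤ τ) :
    entmaxTerm α τ x = 0 := by
  have hexp : (1 : ℝ) / (α - 1) ≠ 0 := one_div_ne_zero (sub_ne_zero.2 hα)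
  rw [entmaxTerm, max_eq_right (sub_nonpos.2 h), Real.zero_rpow hexp]

theorem entmaxTerm_lt_of_lt_rpow {α τ x t : ℝ} (hα : 1 < α) (ht : 0 < t)
    (h : (α - 1) * x - τ < t ^ (α - 1)) : entmaxTerm α τ x < t := by
  have hβ : 0 < α - 1 := sub_pos.2 hα
  calc entmaxTerm α τ x
      < (t ^ (α - 1)) ^ ((1 : ℝ) / (α - 1)) :=
        Real.rpow_lt_rpow (le_max_right _ _) (max_lt h (Real.rpow_pos_of_pos ht _))
          (one_div_pos.2 hβ)
    _ = t := by rw [← Real.rpow_mul ht.le, mul_one_div_cancel hβ.ne', Real.rpow_one]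

theorem entmax_two_level_dense_general
    (α : ℝ) (hα : 1 < α) (n k : ℕ) (hk : 1 ≤ k)
    (M m : ℝ) (hMm : m < M)
    (hgap : M - m < (k : ℝ) ^ (-(α - 1)) / (α - 1))
    (z : Fin n → ℝ)
    (hcard : {i : Fin n | z i = M}.ncard = k)
    (hvals : ∀ i, z i = M ∨ z i = m)
    (τ : ℝ) (hτ : ∑ i, entmaxTerm α τ (z i) = 1) :
    ∀ i, 0 < entmaxTerm α τ (z i) := by
  have hβ : 0 < α - 1 := sub_pos.2 hα
  have hkpos : (0 : ℝ) < k := by exact_mod_cast hk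
  have hτm : τ < (α - 1) * m := by
    by_contra! hle
    have hsum : ∑ i, entmaxTerm α τ (z i) = k * entmaxTerm α τ M := by
      rw [Finset.sum_comp_eq_ncard_nsmul z _ hvals (entmaxTerm_eq_zero_of_le hα.ne' hle),
        hcard, nsmul_eq_mul]
    have hM : entmaxTerm α τ M < 1 / k := by
      refine entmaxTerm_lt_of_lt_rpow hα (one_div_pos.2 hkpos) ?_
      rw [one_div, Real.inv_rpow hkpos.le, ← Real.rpow_neg hkpos.le]
      nlinarith [(lt_div_iff₀ hβ).1 hgap]
    have : (k : ℝ) * entmaxTerm α τ M < 1 := by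
      simpa [hkpos.ne'] using mul_lt_mul_of_pos_left hM hkpos
    linarith
  intro i
  have hzi : m ≤ z i := (hvals i).elim (fun h => h ▸ hMm.le) (fun h => h.ge)
  exact entmaxTerm_pos_of_lt (hτm.trans_le (mul_le_mul_of_nonneg_left hzi hβ.le))

/-- Two-level logits in the dense regime: if exactly `k` coordinates of `z` equal `M`,
the remaining `n − k` equal `m`, and `M − m < k^{−(α−1)}/(α−1)`, then every coordinate of
`α-entmax(z)` is strictly positive. -/
theorem entmax_two_level_dense
    (α : ℝ) (hα : 1 < α) (n k : ℕ) (hk : 1 ≤ k) (hkn : k < n)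
    (M m : ℝ) (hMm : m < M)
    (hgap : M - m < (k : ℝ) ^ (-(α - 1)) / (α - 1))
    (z : Fin n → ℝ)
    (hcard : {i : Fin n | z i = M}.ncard = k)
    (hvals : ∀ i, z i = M ∨ z i = m)
    (τ : ℝ) (hτ : ∑ i, entmaxTerm α τ (z i) = 1) :
    ∀ i, 0 < entmaxTerm α τ (z i) :=
  entmax_two_level_dense_general α hα n k hk M m hMm hgap z hcard hvals τ hτ
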